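/- arXiv:1305.1798 — 3 statements merged into one kernel-verified Lean document; each statement's English description precedes it below -/
import Mathlib

section
/- If a rotation of the Euclidean plane by angle 2π/n (n ≥ 1) maps a lattice Γ ⊂ ℝ² onto itself, then n ∈ {1, 2, 3, 4, 6}. -/
open Real

/-! In a lattice basis the rotation has an integer matrix, so its trace `2 cos (2π/n)` is an
integer; Niven's theorem on rational values of `cos` at rational multiples of `π` then leaves
only `2π/n ∈ {π/3, π/2, 2π/3, π}` for `n ≥ 2`. -/

theorem LinearMap.trace_mem_range_algebraMap_of_mem_span {ι R S M : Type*} [Fintype ι]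
    [DecidableEq ι] [CommRing R] [IsDomain R] [CommRing S] [Nontrivial S] [Algebra R S]
    [Module.IsTorsionFree R S] [AddCommGroup M] [Module R M] [Module S M] [IsScalarTower R S M]
    (b : Module.Basis ι S M) (f : M →ₗ[S] M)
    (hf : ∀ i, f (b i) ∈ Submodule.span R (Set.range b)) :
    LinearMap.trace S M f ∈ (algebraMap R S).range := by
  rw [LinearMap.trace_eq_matrix_trace S b]
  refine Subring.sum_mem _ fun i _ => ?_
  rw [Matrix.diag_apply, LinearMap.toMatrix_apply]
  exact (b.mem_span_iff_repr_mem R _).mp (hf i) i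

theorem Matrix.trace_rotation (θ : ℝ) :
    (!![cos θ, -sin θ; sin θ, cos θ] : Matrix (Fin 2) (Fin 2) ℝ).trace = 2 * cos θ := by
  rw [Matrix.trace_fin_two_of]; ring

theorem mem_of_cos_two_pi_div_rat {n : ℕ} (hn : 1 ≤ n) (hcos : ∃ q : ℚ, cos (2 * π / n) = q) :
    n ∈ ({1, 2, 3, 4, 6} : Set ℕ) := by
  obtain rfl | hn2 := hn.eq_or_lt
  · simp
  have hr : ((2 / n : ℚ) : ℝ) * π = 2 * π / n := by push_cast; ring
  have hbnd : (2 / n : ℚ) ∈ Set.Icc 0 1 := by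
    constructor
    · positivity
    · rw [div_le_one (by positivity)]; exact_mod_cast hn2
  have := niven_angle_div_pi_eq (hr ▸ hcos) hbnd
  have hn0 : (n : ℚ) ≠ 0 := by positivity
  simp only [Set.mem_insert_iff, Set.mem_singleton_iff] at this ⊢
  rcases this with h | h | h | h | h <;> field_simp at h <;> norm_cast at h <;> omega

/-- Crystallographic restriction in the plane: if the rotation through `2π/n`
(`n ≥ 1`) maps a lattice `Γ ⊂ ℝ²` onto itself, then `n ∈ {1, 2, 3, 4, 6}`. -/
theorem crystallographic_restriction_plane
    (b₁ b₂ : Fin 2 → ℝ) (hb : LinearIndependent ℝ ![b₁, b₂])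
    (Γ : Set (Fin 2 → ℝ))
    (hΓ : Γ = {x | ∃ m n : ℤ, x = (m : ℝ) • b₁ + (n : ℝ) • b₂})
    (n : ℕ) (hn : 1 ≤ n)
    (R : Matrix (Fin 2) (Fin 2) ℝ)
    (hR : R = !![Real.cos (2 * π / n), -Real.sin (2 * π / n);
                 Real.sin (2 * π / n),  Real.cos (2 * π / n)])
    (hfix : R.mulVec '' Γ = Γ) :
    n ∈ ({1, 2, 3, 4, 6} : Set ℕ) := by
  let B := basisOfLinearIndependentOfCardEqFinrank hb (by simp)
  have hΓ_span : Γ = Submodule.span ℤ (Set.range B) := by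
    ext x
    simp only [hΓ, B, coe_basisOfLinearIndependentOfCardEqFinrank, Matrix.range_cons,
      Matrix.range_empty, Set.union_empty, Set.singleton_union, SetLike.mem_coe,
      Submodule.mem_span_pair, Int.cast_smul_eq_zsmul, Set.mem_ofPred_eq, eq_comm]
  have hRB (i : Fin 2) : Matrix.toLin' R (B i) ∈ Submodule.span ℤ (Set.range B) := by
    rw [← SetLike.mem_coe, ← hΓ_span, ← hfix, Matrix.toLin'_apply]
    exact Set.mem_image_of_mem _ (hΓ_span ▸ Submodule.subset_span (Set.mem_range_self i))
  obtain ⟨k, hk⟩ := LinearMap.trace_mem_range_algebraMap_of_mem_span B _ hRB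
  rw [Matrix.trace_toLin'_eq, hR, Matrix.trace_rotation, algebraMap_int_eq, eq_intCast] at hk
  exact mem_of_cos_two_pi_div_rat hn ⟨k / 2, by push_cast; linarith⟩
end

section
/- For a > b > 0 with a/b irrational, let r₀ = a, r₁ = b, r_{n+1} = r_{n-1} - ⌊r_{n-1}/r_n⌋·r_n. Then (1/a)·∑_{n=0}^∞ r_n ≤ τ², where τ = (1+√5)/2, with equality when a/b = τ. -/
/-!
Irrationality of `r n / r (n + 1)` is inherited by the next ratio, so the remainders stay
positive and strictly decrease. Hence every partial quotient is at least `1`, and the remainders satisfy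
`r (n + 2) + r (n + 1) ≤ r n`. For any nonnegative sequence with this property the tail sum
from `n` is at most `φ (r n + r (n + 1))`: peel off one term when `r n ≤ φ r (n + 1)` and
two terms otherwise, using `φ² = φ + 1` in both cases. Applying this to the tail from `1`
gives `∑ r ≤ r 0 + φ (r 1 + r 2) ≤ r 0 + φ r 0 = φ² r 0`. When `r 0 / r 1 = φ`, every partial quotient is `1`
because `Int.fract φ = φ⁻¹`, so the remainders form the geometric sequence `φ⁻ⁿ r 0`,
whose sum is exactly `φ² r 0`.
-/

open Finset Real goldenRatio

lemma fract_goldenRatio : Int.fract φ = φ⁻¹ := by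
  have hfloor : ⌊φ⌋ = 1 :=
    Int.floor_eq_iff.mpr ⟨by simpa using one_lt_goldenRatio.le, by norm_num [goldenRatio_lt_two]⟩
  rw [Int.fract, hfloor, inv_goldenRatio, ← one_sub_goldenConj]
  simp

lemma one_sub_inv_goldenRatio : 1 - φ⁻¹ = φ⁻¹ ^ 2 := by
  rw [inv_goldenRatio, neg_sq, goldenConj_sq]
  ring

lemma sum_range_succ_add (s : ℕ → ℝ) (m k : ℕ) :
    ∑ i ∈ range (m + 1), s (k + i) = s k + ∑ i ∈ range m, s (k + 1 + i) := by
  rw [sum_range_succ', add_comm]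
  simp only [add_zero, add_assoc, add_comm 1]

section GoldenBound

variable {s : ℕ → ℝ}

lemma sum_range_add_le_goldenRatio_mul (hs : ∀ n, 0 ≤ s n)
    (hrec : ∀ n, s (n + 2) + s (n + 1) ≤ s n) (N n : ℕ) :
    ∑ i ∈ range N, s (n + i) ≤ φ * (s n + s (n + 1)) := by
  induction N using Nat.strong_induction_on generalizing n with
  | _ N ih =>
    have hn := hs n
    have hn1 := hs (n + 1)
    match N with
    | 0 => simp only [range_zero, sum_empty]; positivity
    | 1 => simp only [sum_range_one, add_zero]; nlinarith [one_lt_goldenRatio]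
    | N + 2 =>
      rw [sum_range_succ_add]
      by_cases hc : s n ≤ φ * s (n + 1)
      · have htail := ih (N + 1) (by omega) (n + 1)
        have hdrop := mul_le_mul_of_nonneg_left (hrec n) goldenRatio_pos.le
        nlinarith [goldenRatio_sq]
      · rw [sum_range_succ_add]
        have htail := ih N (by omega) (n + 1 + 1)
        have hdrop := mul_le_mul_of_nonneg_left (hrec (n + 1)) goldenRatio_pos.le
        have hsmall := mul_le_mul_of_nonneg_left (not_le.mp hc).le
          (sub_nonneg.mpr one_lt_goldenRatio.le)
        nlinarith [goldenRatio_sq]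

theorem tsum_le_goldenRatio_sq_mul (hs : ∀ n, 0 ≤ s n)
    (hrec : ∀ n, s (n + 2) + s (n + 1) ≤ s n) : ∑' n, s n ≤ φ ^ 2 * s 0 := by
  refine Real.tsum_le_of_sum_range_le hs fun N => ?_
  have htail : ∑ i ∈ range N, s (1 + i) ≤ φ * (s 1 + s 2) :=
    sum_range_add_le_goldenRatio_mul hs hrec N 1
  have hdrop : φ * (s 2 + s 1) ≤ φ * s 0 := mul_le_mul_of_nonneg_left (hrec 0) goldenRatio_pos.le
  calc ∑ i ∈ range N, s i ≤ ∑ i ∈ range (N + 1), s i := by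
        rw [sum_range_succ]; linarith [hs N]
    _ = s 0 + ∑ i ∈ range N, s (1 + i) := by simpa using sum_range_succ_add s N 0
    _ ≤ φ ^ 2 * s 0 := by rw [goldenRatio_sq]; linarith

end GoldenBound

section EuclideanRemainders

variable {r : ℕ → ℝ}

lemma remainder_eq_fract_mul
    (hrec : ∀ n : ℕ, r (n + 2) = r n - (⌊r n / r (n + 1)⌋ : ℝ) * r (n + 1))
    {n : ℕ} (h : r (n + 1) ≠ 0) : r (n + 2) = Int.fract (r n / r (n + 1)) * r (n + 1) := by
  rw [hrec, Int.fract, sub_mul, div_mul_cancel₀ _ h]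

lemma remainder_step
    (hrec : ∀ n : ℕ, r (n + 2) = r n - (⌊r n / r (n + 1)⌋ : ℝ) * r (n + 1))
    {n : ℕ} (hpos : 0 < r (n + 1)) (hirr : Irrational (r n / r (n + 1))) :
    0 < r (n + 2) ∧ r (n + 2) < r (n + 1) ∧ Irrational (r (n + 1) / r (n + 2)) := by
  have hfract_pos : 0 < Int.fract (r n / r (n + 1)) := Int.fract_pos.mpr (hirr.ne_int _)
  have hfract_lt := Int.fract_lt_one (r n / r (n + 1))
  rw [remainder_eq_fract_mul hrec hpos.ne']
  refine ⟨by positivity, mul_lt_of_lt_one_left hpos hfract_lt, ?_⟩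
  rw [div_mul_cancel_right₀ hpos.ne']
  exact (hirr.sub_intCast _).inv

theorem remainder_invariant
    (hrec : ∀ n : ℕ, r (n + 2) = r n - (⌊r n / r (n + 1)⌋ : ℝ) * r (n + 1))
    (hpos : 0 < r 1) (hlt : r 1 < r 0) (hirr : Irrational (r 0 / r 1)) (n : ℕ) :
    0 < r (n + 1) ∧ r (n + 1) < r n ∧ Irrational (r n / r (n + 1)) := by
  induction n with
  | zero => exact ⟨hpos, hlt, hirr⟩
  | succ n ih => exact remainder_step hrec ih.1 ih.2.2

lemma remainder_add_le
    (hrec : ∀ n : ℕ, r (n + 2) = r n - (⌊r n / r (n + 1)⌋ : ℝ) * r (n + 1))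
    {n : ℕ} (hpos : 0 < r (n + 1)) (hle : r (n + 1) ≤ r n) : r (n + 2) + r (n + 1) ≤ r n := by
  have hquot : (1 : ℝ) ≤ ⌊r n / r (n + 1)⌋ := by
    exact_mod_cast Int.le_floor.mpr (by exact_mod_cast (one_le_div hpos).mpr hle)
  rw [hrec]
  nlinarith

theorem tsum_remainder_le
    (hrec : ∀ n : ℕ, r (n + 2) = r n - (⌊r n / r (n + 1)⌋ : ℝ) * r (n + 1))
    (hpos : 0 < r 1) (hlt : r 1 < r 0) (hirr : Irrational (r 0 / r 1)) :
    ∑' n, r n ≤ φ ^ 2 * r 0 := by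
  have hinv := remainder_invariant hrec hpos hlt hirr
  refine tsum_le_goldenRatio_sq_mul (fun n => ?_) fun n => ?_
  · cases n with
    | zero => exact (hpos.trans hlt).le
    | succ n => exact (hinv n).1.le
  · exact remainder_add_le hrec (hinv n).1 (hinv n).2.1.le

lemma remainder_succ_succ_of_div_eq_goldenRatio
    (hrec : ∀ n : ℕ, r (n + 2) = r n - (⌊r n / r (n + 1)⌋ : ℝ) * r (n + 1))
    {n : ℕ} (h : r (n + 1) ≠ 0) (hφ : r n / r (n + 1) = φ) : r (n + 2) = φ⁻¹ * r (n + 1) := by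
  rw [remainder_eq_fract_mul hrec h, hφ, fract_goldenRatio]

theorem remainder_eq_geometric
    (hrec : ∀ n : ℕ, r (n + 2) = r n - (⌊r n / r (n + 1)⌋ : ℝ) * r (n + 1))
    (h0 : r 0 ≠ 0) (h1 : r 1 = φ⁻¹ * r 0) (n : ℕ) : r n = φ⁻¹ ^ n * r 0 := by
  have hratio : ∀ n, r n ≠ 0 ∧ r (n + 1) = φ⁻¹ * r n := by
    intro n
    induction n with
    | zero => exact ⟨h0, h1⟩
    | succ n ih =>
      have hne : r (n + 1) ≠ 0 := ih.2 ▸ mul_ne_zero (inv_ne_zero goldenRatio_ne_zero) ih.1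
      refine ⟨hne, remainder_succ_succ_of_div_eq_goldenRatio hrec hne ?_⟩
      rw [ih.2, div_mul_cancel_right₀ ih.1, inv_inv]
  induction n with
  | zero => simp
  | succ n ih => rw [(hratio n).2, ih, pow_succ', mul_assoc]

theorem tsum_remainder_eq
    (hrec : ∀ n : ℕ, r (n + 2) = r n - (⌊r n / r (n + 1)⌋ : ℝ) * r (n + 1))
    (h0 : r 0 ≠ 0) (h1 : r 1 = φ⁻¹ * r 0) : ∑' n, r n = φ ^ 2 * r 0 := by
  rw [tsum_congr (remainder_eq_geometric hrec h0 h1), tsum_mul_right,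
    tsum_geometric_of_lt_one (inv_nonneg.mpr goldenRatio_pos.le)
      (inv_lt_one_of_one_lt₀ one_lt_goldenRatio),
    one_sub_inv_goldenRatio, ← inv_pow, inv_inv]

end EuclideanRemainders

/-- Worst-case bound for the remainder series of the real Euclidean
algorithm: with `τ = (1+√5)/2`, for `a > b > 0` and `a/b` irrational,
`(1/a)·∑ r_n ≤ τ²`, with equality when `a/b = τ`. -/
theorem euclidean_remainders_golden_bound
    (τ : ℝ) (hτ : τ = (1 + Real.sqrt 5) / 2)
    (a b : ℝ) (hb : 0 < b) (hab : b < a) (hirr : Irrational (a / b))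
    (r : ℕ → ℝ) (h0 : r 0 = a) (h1 : r 1 = b)
    (hrec : ∀ n : ℕ, r (n + 2) = r n - (⌊r n / r (n + 1)⌋ : ℝ) * r (n + 1)) :
    (1 / a) * (∑' n : ℕ, r n) ≤ τ ^ 2 ∧
    (a / b = τ → (1 / a) * (∑' n : ℕ, r n) = τ ^ 2) := by
  obtain rfl : τ = φ := hτ
  have ha : 0 < a := hb.trans hab
  subst h0 h1
  rw [one_div_mul_eq_div]
  refine ⟨?_, fun hφ => ?_⟩
  · exact (div_le_iff₀ ha).mpr (tsum_remainder_le hrec hb hab hirr)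
  · have h1 : r 1 = φ⁻¹ * r 0 := by rw [← hφ, inv_div, div_mul_cancel₀ _ ha.ne']
    rw [tsum_remainder_eq hrec ha.ne' h1, mul_div_cancel_right₀ _ ha.ne']
end

section
/- There is no finite subgroup G of O(3) containing the full octahedral group (the symmetry group of the cube, of order 48) as a subgroup of index 2 such that G contains it properly with all rotations in G being 1-, 2-, 3-, 4- or 6-fold; in particular, no lattice in ℝ³ has a point group of order 96 containing the octahedral group. -/
/-!
The symmetries of the cube `[-1, 1]³` in `O(3)` are the signed permutation matrices: an
orthogonal matrix mapping the cube into itself has rows of `ℓ¹`-norm at most `1` and `ℓ²`-norm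
`1`, so each row has a single nonzero entry `±1`. There are `3! · 2³ = 48` of them.

If a finite multiplicatively closed set `S ⊆ O(3)` contains this group `Oct` and has twice its
size, then for `g ∈ S \ Oct` both `g • Oct` and `Oct • g` fill up `S \ Oct`, so `g` normalizes
`Oct`. But `Oct` is self-normalizing in `O(3)`: conjugation by `g` preserves trace and determinant,
and the only signed permutation matrices with trace `1` and determinant `1` are the quarter turns
about the coordinate axes. So `g` maps the axis of each quarter turn to a coordinate axis, hence is
itself a signed permutation matrix, a contradiction.
-/

theorem Subgroup.subset_normalizer_of_card_eq_two_mul {G : Type*} [Group G] {H : Subgroup G}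
    {S : Set G} (hS : S.Finite) (hmul : ∀ a ∈ S, ∀ b ∈ S, a * b ∈ S)
    (hHS : (H : Set G) ⊆ S) (hcard : Nat.card S = 2 * Nat.card H) :
    S ⊆ Subgroup.normalizer (H : Set G) := by
  rw [Nat.card_coe_set_eq] at hcard
  intro g hg
  by_cases hgH : g ∈ H
  · exact H.le_normalizer hgH
  have hHfin : (H : Set G).Finite := hS.subset hHS
  -- both cosets `g H` and `H g` fill up the complement `S \ H`, which has the size of `H`
  have hcoset : ∀ f : G → G, Function.Injective f →
      (∀ h ∈ H, f h ∈ S ∧ (f h ∈ H → g ∈ H)) → f '' H = S \ H := fun f hf hfH => by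
    refine Set.eq_of_subset_of_ncard_le ?_ ?_ hS.sdiff
    · rintro _ ⟨h, hh, rfl⟩
      exact ⟨(hfH h hh).1, fun h' => hgH ((hfH h hh).2 h')⟩
    · have hH : Nat.card H = (H : Set G).ncard := Nat.card_coe_set_eq (H : Set G)
      rw [Set.ncard_sdiff hHS hHfin, Set.ncard_image_of_injective _ hf, hcard, hH]
      omega
  have hL := hcoset (g * ·) (mul_right_injective g) fun h hh =>
    ⟨hmul _ hg _ (hHS hh), (mul_mem_cancel_right hh).1⟩
  have hR := hcoset (· * g) (mul_left_injective g) fun h hh =>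
    ⟨hmul _ (hHS hh) _ hg, (mul_mem_cancel_left hh).1⟩
  have : Finite (H : Set G) := hHfin
  refine mem_normalizer_fintype fun h hh => ?_
  obtain ⟨h', hh', he⟩ : g * h ∈ (· * g) '' H := hR ▸ hL ▸ ⟨h, hh, rfl⟩
  simpa [← he] using hh'

theorem exists_forall_ne_eq_zero_of_sum_abs_le_one {ι : Type*} [Fintype ι] {x : ι → ℝ}
    (habs : ∑ j, |x j| ≤ 1) (hsq : ∑ j, x j ^ 2 = 1) : ∃ j, ∀ j' ≠ j, x j' = 0 := by
  classical
  have hle : ∀ j, |x j| ≤ 1 := fun j =>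
    (Finset.single_le_sum (fun j _ => abs_nonneg (x j)) (Finset.mem_univ j)).trans habs
  have hsq_le : ∀ j, x j ^ 2 ≤ |x j| := fun j => by
    rw [← sq_abs, sq]; exact mul_le_of_le_one_left (abs_nonneg _) (hle j)
  have hdiff : ∀ j, x j ^ 2 = |x j| := by
    have hnonneg : ∀ j ∈ Finset.univ, 0 ≤ |x j| - x j ^ 2 := fun j _ =>
      sub_nonneg.2 (hsq_le j)
    have hzero : ∑ j, (|x j| - x j ^ 2) = 0 :=
      le_antisymm (by rw [Finset.sum_sub_distrib, hsq]; linarith) (Finset.sum_nonneg hnonneg)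
    intro j
    linarith [(Finset.sum_eq_zero_iff_of_nonneg hnonneg).1 hzero j (Finset.mem_univ j)]
  have habs_one : ∀ j, x j ≠ 0 → |x j| = 1 := fun j hj => by
    have h := hdiff j
    rw [← sq_abs, sq] at h
    exact (mul_eq_right₀ (abs_ne_zero.2 hj)).1 h
  obtain ⟨j, hj⟩ : ∃ j, x j ≠ 0 := by
    by_contra! h
    simp [h] at hsq
  refine ⟨j, fun j' hj' => by_contra fun hx => ?_⟩
  have hpair := Finset.sum_le_sum_of_subset_of_nonneg (Finset.subset_univ {j, j'})
    fun k _ _ => abs_nonneg (x k)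
  rw [Finset.sum_pair hj'.symm, habs_one j hj, habs_one j' hx] at hpair
  linarith

namespace Matrix

open Equiv

section Hyperoctahedral

variable {ι : Type*} [Fintype ι]

lemma image_mulVec_mul {R m n o : Type*} [CommSemiring R] [Fintype n] [Fintype o]
    (A : Matrix m n R) (B : Matrix n o R) (s : Set (o → R)) :
    (A * B).mulVec '' s = A.mulVec '' (B.mulVec '' s) := by
  rw [Set.image_image]
  simp only [mulVec_mulVec]

lemma image_mulVec_mul_eq_self {R n : Type*} [CommSemiring R] [Fintype n]
    {A B : Matrix n n R} {s : Set (n → R)} (hA : A.mulVec '' s = s) (hB : B.mulVec '' s = s) :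
    (A * B).mulVec '' s = s := by
  rw [image_mulVec_mul, hB, hA]

def cube (ι : Type*) : Set (ι → ℝ) := {v | ∀ i, |v i| ≤ 1}

lemma sum_abs_le_one_of_image_cube_subset {A : Matrix ι ι ℝ}
    (h : A.mulVec '' cube ι ⊆ cube ι) (i : ι) : ∑ j, |A i j| ≤ 1 := by
  have hsign : (fun j => (SignType.sign (A i j) : ℝ)) ∈ cube ι := fun j => by
    show |(SignType.sign (A i j) : ℝ)| ≤ 1
    generalize SignType.sign (A i j) = t
    cases t <;> simp
  calc ∑ j, |A i j| = A.mulVec (fun j => (SignType.sign (A i j) : ℝ)) i := by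
        simp [mulVec, dotProduct, self_mul_sign]
    _ ≤ 1 := (le_abs_self _).trans (h ⟨_, hsign, rfl⟩ i)

variable [DecidableEq ι]

variable (ι) in
def hyperoctahedralGroup : Subgroup (orthogonalGroup ι ℝ) where
  carrier := {A | (A : Matrix ι ι ℝ).mulVec '' cube ι = cube ι}
  mul_mem' := image_mulVec_mul_eq_self
  one_mem' := by simp
  inv_mem' {A} hA := by
    simp only [Set.mem_ofPred_eq] at *
    conv_lhs => rw [← hA]
    rw [← image_mulVec_mul, ← UnitaryGroup.mul_val, inv_mul_cancel, UnitaryGroup.one_val]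
    simp

lemma mem_hyperoctahedralGroup {A : orthogonalGroup ι ℝ} :
    A ∈ hyperoctahedralGroup ι ↔ (A : Matrix ι ι ℝ).mulVec '' cube ι = cube ι := Iff.rfl

def signedPermMatrix (σ : Perm ι) (s : ι → ℤˣ) : Matrix ι ι ℝ :=
  σ.permMatrix ℝ * diagonal fun i => ((s i : ℤ) : ℝ)

lemma signedPermMatrix_apply (σ : Perm ι) (s : ι → ℤˣ) (i j : ι) :
    signedPermMatrix σ s i j = if σ i = j then ((s j : ℤ) : ℝ) else 0 := by
  simp [signedPermMatrix, Perm.permMatrix, PEquiv.toMatrix_apply]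

lemma signedPermMatrix_mulVec (σ : Perm ι) (s : ι → ℤˣ) (v : ι → ℝ) (i : ι) :
    (signedPermMatrix σ s).mulVec v i = (s (σ i) : ℤ) * v (σ i) := by
  simp [mulVec, dotProduct, signedPermMatrix_apply]

lemma abs_intCast_units (u : ℤˣ) : |((u : ℤ) : ℝ)| = 1 := by
  rcases Int.units_eq_one_or u with rfl | rfl <;> simp

lemma intCast_units_mul_self (u : ℤˣ) : ((u : ℤ) : ℝ) * (u : ℤ) = 1 := by
  rcases Int.units_eq_one_or u with rfl | rfl <;> simp

lemma signedPermMatrix_mem_orthogonalGroup (σ : Perm ι) (s : ι → ℤˣ) :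
    signedPermMatrix σ s ∈ orthogonalGroup ι ℝ := by
  rw [mem_orthogonalGroup_iff, signedPermMatrix, transpose_mul, diagonal_transpose,
    transpose_permMatrix, mul_assoc, ← mul_assoc (diagonal _), diagonal_mul_diagonal]
  simp [intCast_units_mul_self, ← permMatrix_mul]

lemma trace_signedPermMatrix (σ : Perm ι) (s : ι → ℤˣ) :
    trace (signedPermMatrix σ s) = ((∑ i, if σ i = i then (s i : ℤ) else 0 : ℤ) : ℝ) := by
  simp [trace, signedPermMatrix_apply]

lemma det_signedPermMatrix (σ : Perm ι) (s : ι → ℤˣ) :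
    det (signedPermMatrix σ s) = (((Perm.sign σ * ∏ i, s i : ℤˣ) : ℤ) : ℝ) := by
  simp [signedPermMatrix]

lemma signedPermMatrix_injective :
    Function.Injective fun p : Perm ι × (ι → ℤˣ) => signedPermMatrix p.1 p.2 := by
  rintro ⟨σ, s⟩ ⟨τ, t⟩ h
  have key : ∀ i, τ i = σ i ∧ t (σ i) = s (σ i) := by
    intro i
    have hi := congr_fun (congr_fun h i) (σ i)
    simp only [signedPermMatrix_apply, if_true] at hi
    split_ifs at hi with hτ
    · exact ⟨hτ, by exact_mod_cast hi.symm⟩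
    · have := abs_intCast_units (s (σ i))
      simp [hi] at this
  have hστ : σ = τ := Equiv.ext fun i => (key i).1.symm
  subst hστ
  refine Prod.ext rfl (funext fun j => ?_)
  simpa using (key (σ.symm j)).2.symm

lemma image_cube_signedPermMatrix (σ : Perm ι) (s : ι → ℤˣ) :
    (signedPermMatrix σ s).mulVec '' cube ι = cube ι := by
  refine subset_antisymm ?_ fun v hv => ⟨fun j => (s j : ℤ) * v (σ.symm j), fun j => ?_, ?_⟩
  · rintro _ ⟨v, hv, rfl⟩ i
    rw [signedPermMatrix_mulVec, abs_mul, abs_intCast_units, one_mul]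
    exact hv _
  · rw [abs_mul, abs_intCast_units, one_mul]
    exact hv _
  · ext i
    simp [signedPermMatrix_mulVec, ← mul_assoc, intCast_units_mul_self]

lemma sum_mul_of_mem_orthogonalGroup {A : Matrix ι ι ℝ} (hA : A ∈ orthogonalGroup ι ℝ)
    (i i' : ι) : ∑ j, A i j * A i' j = (1 : Matrix ι ι ℝ) i i' := by
  rw [← (mem_orthogonalGroup_iff ι ℝ).1 hA, mul_apply]
  rfl

lemma exists_signedPermMatrix_of_mem_orthogonalGroup {A : Matrix ι ι ℝ}
    (hA : A ∈ orthogonalGroup ι ℝ) (hrow : ∀ i, ∃ j, ∀ j' ≠ j, A i j' = 0) :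
    ∃ σ s, signedPermMatrix σ s = A := by
  choose ρ hρ using hrow
  have hsum : ∀ i i', ∑ j, A i j * A i' j = A i (ρ i) * A i' (ρ i) := fun i i' =>
    Finset.sum_eq_single _ (fun j _ hj => by rw [hρ i j hj, zero_mul]) (by simp)
  have hsq : ∀ i, A i (ρ i) * A i (ρ i) = 1 := fun i => by
    simpa [hsum] using sum_mul_of_mem_orthogonalGroup hA i i
  have hinj : Function.Injective ρ := fun i i' he => by
    by_contra hne
    have h := sum_mul_of_mem_orthogonalGroup hA i i'
    rw [hsum, one_apply_ne hne, he] at h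
    rcases mul_eq_zero.1 h with h0 | h0
    · simpa [he, h0] using hsq i
    · simpa [h0] using hsq i'
  let σ := Equiv.ofBijective ρ (Finite.injective_iff_bijective.1 hinj)
  refine ⟨σ, fun j => if 0 < A (σ.symm j) j then 1 else -1, ?_⟩
  ext i j
  rw [signedPermMatrix_apply]
  by_cases hij : σ i = j
  · subst hij
    have h1 : A i (σ i) * A i (σ i) = 1 := hsq i
    simp only [if_true, σ.symm_apply_apply]
    split_ifs <;> push_cast <;> nlinarith
  · rw [if_neg hij]
    exact (hρ i j (Ne.symm hij)).symm

theorem mem_hyperoctahedralGroup_iff {A : orthogonalGroup ι ℝ} :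
    A ∈ hyperoctahedralGroup ι ↔ ∃ σ s, signedPermMatrix σ s = (A : Matrix ι ι ℝ) := by
  refine ⟨fun h => exists_signedPermMatrix_of_mem_orthogonalGroup A.2 fun i => ?_, ?_⟩
  · refine exists_forall_ne_eq_zero_of_sum_abs_le_one
      (sum_abs_le_one_of_image_cube_subset h.le i) ?_
    simpa [sq] using sum_mul_of_mem_orthogonalGroup A.2 i i
  · rintro ⟨σ, s, hA⟩
    rw [mem_hyperoctahedralGroup, ← hA]
    exact image_cube_signedPermMatrix σ s

theorem card_hyperoctahedralGroup :
    Nat.card (hyperoctahedralGroup ι) = (Fintype.card ι).factorial * 2 ^ Fintype.card ι := by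
  let f : Perm ι × (ι → ℤˣ) → orthogonalGroup ι ℝ := fun p =>
    ⟨signedPermMatrix p.1 p.2, signedPermMatrix_mem_orthogonalGroup p.1 p.2⟩
  have hf : Function.Injective f := fun p q h =>
    signedPermMatrix_injective (congrArg Subtype.val h)
  have hrange : Set.range f = hyperoctahedralGroup ι := by
    ext A
    simp [f, mem_hyperoctahedralGroup_iff, Subtype.ext_iff]
  rw [← SetLike.coe_sort_coe, ← hrange, Nat.card_range_of_injective hf]
  simp [Nat.card_eq_fintype_card, Fintype.card_units_int, Fintype.card_perm]

lemma trace_conj_of_orthogonalGroup (g A : orthogonalGroup ι ℝ) :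
    trace ((g * A * g⁻¹ : orthogonalGroup ι ℝ) : Matrix ι ι ℝ) =
      trace (A : Matrix ι ι ℝ) := by
  rw [UnitaryGroup.mul_val, trace_mul_comm, ← UnitaryGroup.mul_val, inv_mul_cancel_left]

lemma det_conj_of_orthogonalGroup (g A : orthogonalGroup ι ℝ) :
    det ((g * A * g⁻¹ : orthogonalGroup ι ℝ) : Matrix ι ι ℝ) =
      det (A : Matrix ι ι ℝ) := by
  simp only [UnitaryGroup.mul_val, det_mul]
  rw [mul_right_comm, ← det_mul, ← UnitaryGroup.mul_val, mul_inv_cancel, UnitaryGroup.one_val,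
    det_one, one_mul]

end Hyperoctahedral

section FinThree

-- A signed permutation matrix with trace `1` and determinant `1` is a quarter turn about a
-- coordinate axis `a`: it swaps the other two coordinates `i`, `σ i` with opposite signs.
lemma exists_forall_ne_eq_zero_of_signedPermMatrix_mulVec_eq_self {σ : Perm (Fin 3)}
    {s : Fin 3 → ℤˣ} (htr : trace (signedPermMatrix σ s) = 1)
    (hdet : det (signedPermMatrix σ s) = 1) {v : Fin 3 → ℝ}
    (hv : (signedPermMatrix σ s).mulVec v = v) : ∃ a, ∀ i ≠ a, v i = 0 := by
  have hquarter : ∀ σ : Perm (Fin 3), ∀ s : Fin 3 → ℤˣ,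
      (∑ i, if σ i = i then (s i : ℤ) else 0) = 1 → Perm.sign σ * ∏ i, s i = 1 →
      ∃ a, ∀ i ≠ a, σ (σ i) = i ∧ s (σ i) * s i = -1 := by
    decide
  rw [trace_signedPermMatrix] at htr
  rw [det_signedPermMatrix] at hdet
  obtain ⟨a, ha⟩ :=
    hquarter σ s (by exact_mod_cast htr) (Units.val_eq_one.1 (by exact_mod_cast hdet))
  refine ⟨a, fun i hi => ?_⟩
  obtain ⟨hσσ, hs⟩ := ha i hi
  have hs' : ((s (σ i) : ℤ) : ℝ) * (s i : ℤ) = -1 := by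
    simpa using congrArg (fun u : ℤˣ => ((u : ℤ) : ℝ)) hs
  have e1 := congr_fun hv i
  have e2 := congr_fun hv (σ i)
  rw [signedPermMatrix_mulVec] at e1 e2
  rw [hσσ] at e2
  linear_combination (-e1 - ((s (σ i) : ℤ) : ℝ) * e2 + v i * hs') / 2

lemma exists_signedPermMatrix_quarterTurn (k : Fin 3) :
    ∃ σ s, trace (signedPermMatrix σ s) = 1 ∧ det (signedPermMatrix σ s) = 1 ∧
      (signedPermMatrix σ s).mulVec (Pi.single k 1) = Pi.single k 1 := by
  obtain ⟨σ, s, htr, hdet, hσk, hsk⟩ : ∃ (σ : Perm (Fin 3)) (s : Fin 3 → ℤˣ),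
      (∑ i, if σ i = i then (s i : ℤ) else 0) = 1 ∧ Perm.sign σ * ∏ i, s i = 1 ∧
        σ k = k ∧ s k = 1 := by
    revert k
    decide
  refine ⟨σ, s, by simp [trace_signedPermMatrix, htr], by simp [det_signedPermMatrix, hdet],
    ?_⟩
  ext i
  rw [signedPermMatrix_mulVec]
  by_cases hi : i = k
  · subst hi
    simp [hσk, hsk]
  · have hσi : σ i ≠ k := fun h => hi (σ.injective (h.trans hσk.symm))
    simp [hσi, hi]

-- A conjugate of a quarter turn about the `k`-th axis is a quarter turn about another
-- coordinate axis, which must contain the image of the `k`-th basis vector.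
theorem normalizer_hyperoctahedralGroup_fin_three :
    Subgroup.normalizer (hyperoctahedralGroup (Fin 3) : Set (orthogonalGroup (Fin 3) ℝ)) =
      hyperoctahedralGroup (Fin 3) := by
  refine le_antisymm (fun g hg => ?_) Subgroup.le_normalizer
  have hrow : ∀ k, ∃ a, ∀ i ≠ a, (g : Matrix (Fin 3) (Fin 3) ℝ)ᵀ k i = 0 := by
    intro k
    obtain ⟨σ, s, htr, hdet, hfix⟩ := exists_signedPermMatrix_quarterTurn k
    let R : orthogonalGroup (Fin 3) ℝ := ⟨_, signedPermMatrix_mem_orthogonalGroup σ s⟩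
    have hR : R ∈ hyperoctahedralGroup (Fin 3) := mem_hyperoctahedralGroup_iff.2 ⟨σ, s, rfl⟩
    obtain ⟨τ, t, hQ⟩ :=
      mem_hyperoctahedralGroup_iff.1 ((Subgroup.mem_normalizer_iff.1 hg R).1 hR)
    refine exists_forall_ne_eq_zero_of_signedPermMatrix_mulVec_eq_self
      (by rw [hQ, trace_conj_of_orthogonalGroup]; exact htr)
      (by rw [hQ, det_conj_of_orthogonalGroup]; exact hdet) ?_
    have hcol : (g : Matrix (Fin 3) (Fin 3) ℝ)ᵀ k =
        (g : Matrix (Fin 3) (Fin 3) ℝ).mulVec (Pi.single k 1) := by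
      rw [mulVec_single_one]
      rfl
    rw [hQ, hcol, mulVec_mulVec, ← UnitaryGroup.mul_val, inv_mul_cancel_right,
      UnitaryGroup.mul_val, ← mulVec_mulVec]
    exact congrArg _ hfix
  have hinv : g⁻¹ ∈ hyperoctahedralGroup (Fin 3) := by
    refine mem_hyperoctahedralGroup_iff.2
      (exists_signedPermMatrix_of_mem_orthogonalGroup g⁻¹.2 ?_)
    simpa [star_eq_conjTranspose, conjTranspose_eq_transpose_of_trivial] using hrow
  exact inv_mem_iff.1 hinv

theorem card_hyperoctahedralGroup_fin_three : Nat.card (hyperoctahedralGroup (Fin 3)) = 48 := by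
  simp [card_hyperoctahedralGroup, Nat.factorial]

theorem card_ne_two_mul_card_hyperoctahedralGroup_fin_three
    {S : Set (Matrix (Fin 3) (Fin 3) ℝ)} (hSO : S ⊆ orthogonalGroup (Fin 3) ℝ)
    (hmul : ∀ A ∈ S, ∀ B ∈ S, A * B ∈ S) (hS : S.Finite)
    (hsub : Subtype.val '' (hyperoctahedralGroup (Fin 3) : Set (orthogonalGroup (Fin 3) ℝ)) ⊆
      S) :
    Nat.card S ≠ 2 * Nat.card (hyperoctahedralGroup (Fin 3)) := by
  intro hcard
  let S' : Set (orthogonalGroup (Fin 3) ℝ) := Subtype.val ⁻¹' S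
  have hS' : S'.Finite := hS.preimage Subtype.val_injective.injOn
  have hHS' : (hyperoctahedralGroup (Fin 3) : Set _) ⊆ S' := fun A hA => hsub ⟨A, hA, rfl⟩
  have hS'card : Nat.card S' = Nat.card S := by
    simp only [Nat.card_coe_set_eq]
    exact Set.ncard_preimage_of_injective_subset_range Subtype.val_injective (by simpa using hSO)
  have hle := Subgroup.subset_normalizer_of_card_eq_two_mul hS'
    (fun A hA B hB => Set.mem_preimage.2 (hmul _ hA _ hB)) hHS' (hS'card.trans hcard)
  rw [normalizer_hyperoctahedralGroup_fin_three] at hle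
  have := Nat.card_mono (hS'.subset hHS') hle
  have := card_hyperoctahedralGroup_fin_three
  simp only [SetLike.coe_sort_coe] at *
  omega

end FinThree

end Matrix

/-- There is no finite subgroup of `O(3)` containing the full octahedral group
(the symmetry group of the cube, of order 48) properly as a subgroup of
index 2 such that all rotations in it are 1-, 2-, 3-, 4- or 6-fold; in
particular, no lattice in `ℝ³` has a point group of order 96 containing the
full octahedral group. -/
theorem no_index_two_crystallographic_supergroup_of_octahedral
    (cube : Set (Fin 3 → ℝ)) (hcube : cube = {v | ∀ i, |v i| ≤ 1})
    (Oct : Set (Matrix (Fin 3) (Fin 3) ℝ))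
    (hOct : Oct = {A | A ∈ Matrix.orthogonalGroup (Fin 3) ℝ ∧
                        A.mulVec '' cube = cube}) :
    (¬ ∃ G : Set (Matrix (Fin 3) (Fin 3) ℝ),
        G ⊆ Matrix.orthogonalGroup (Fin 3) ℝ ∧
        (1 : Matrix (Fin 3) (Fin 3) ℝ) ∈ G ∧
        (∀ A ∈ G, ∀ B ∈ G, A * B ∈ G) ∧
        (∀ A ∈ G, A⁻¹ ∈ G) ∧
        G.Finite ∧
        Oct ⊆ G ∧ Oct ≠ G ∧
        Nat.card G = 2 * Nat.card Oct ∧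
        (∀ A ∈ G, A.det = 1 →
          ∃ n ∈ ({1, 2, 3, 4, 6} : Set ℕ), A ^ n = 1 ∧
            ∀ m : ℕ, 0 < m → A ^ m = 1 → n ≤ m)) ∧
    (¬ ∃ (b : Fin 3 → (Fin 3 → ℝ)) (Γ P : Set _),
        LinearIndependent ℝ b ∧
        Γ = {x : Fin 3 → ℝ | ∃ c : Fin 3 → ℤ, x = ∑ i, (c i : ℝ) • b i} ∧
        P = {A : Matrix (Fin 3) (Fin 3) ℝ |
              A ∈ Matrix.orthogonalGroup (Fin 3) ℝ ∧ A.mulVec '' Γ = Γ} ∧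
        Nat.card P = 96 ∧ Oct ⊆ P) := by
  have hOct' : Oct = Subtype.val ''
      (Matrix.hyperoctahedralGroup (Fin 3) : Set (Matrix.orthogonalGroup (Fin 3) ℝ)) := by
    subst hOct hcube
    ext A
    constructor
    · rintro ⟨hA, h⟩
      exact ⟨⟨A, hA⟩, h, rfl⟩
    · rintro ⟨B, hB, rfl⟩
      exact ⟨B.2, hB⟩
  have hcard : Nat.card Oct = Nat.card (Matrix.hyperoctahedralGroup (Fin 3)) := by
    rw [hOct', Nat.card_image_of_injective Subtype.val_injective]
    rfl
  constructor
  · rintro ⟨G, hGO, -, hmul, -, hG, hsub, -, hGcard, -⟩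
    exact Matrix.card_ne_two_mul_card_hyperoctahedralGroup_fin_three hGO hmul hG (hOct' ▸ hsub)
      (hcard ▸ hGcard)
  · rintro ⟨b, Γ, P, -, -, hP, hPcard, hsub⟩
    have hPO : P ⊆ Matrix.orthogonalGroup (Fin 3) ℝ := hP ▸ fun A hA => hA.1
    have hPmul : ∀ A ∈ P, ∀ B ∈ P, A * B ∈ P := hP ▸ fun A hA B hB =>
      ⟨mul_mem hA.1 hB.1, Matrix.image_mulVec_mul_eq_self hA.2 hB.2⟩
    have hPfin : P.Finite :=
      Set.finite_of_ncard_ne_zero (by rw [← Nat.card_coe_set_eq, hPcard]; simp)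
    exact Matrix.card_ne_two_mul_card_hyperoctahedralGroup_fin_three hPO hPmul hPfin
      (hOct' ▸ hsub) (by rw [hPcard, Matrix.card_hyperoctahedralGroup_fin_three])
end
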